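/- arXiv:1510.05555 — 4 statements merged into one kernel-verified Lean document; each statement's English description precedes it below -/
import Mathlib

section
/- Let G be a finite graph, Sch a well-defined ShEx schema, and (typing_cert, lw_cert) a global typing witness for G by Sch that is total on negated shapes, i.e. for every node n and every S ∈ negated-shapes(Sch), either (n, S) or (n, !S) belongs to typing_cert. Then for every global typing witness (typing, lw) for G by Sch, every shape label S ∈ negated-shapes(Sch), and every node n: if (n, S) ∈ typing then (n, S) ∈ typing_cert, and if (n, !S) ∈ typing then (n, !S) ∈ typing_cert. -/
/-! Common formalization of ShEx schemas, graphs, local witnesses and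
global typing witnesses. -/

/-- A possibly inverse property: `fwd p` is the property `p`,
`inv p` is the inverse property `^p`. -/
inductive Step (P : Type) where
  | fwd (p : P)
  | inv (p : P)

/-- An edge `(n, q, n')` of the graph abstraction of an RDF graph. -/
abbrev Edge (N P : Type) := N × Step P × N

/-- A finite graph: finite sets of nodes and edges, a value function, and
closure under taking inverse edges. -/
structure ShExGraph (N P V : Type) where
  nodes : Set N
  edges : Set (Edge N P)
  val : N → V
  nodes_finite : nodes.Finite
  edges_finite : edges.Finite
  edge_src_mem : ∀ e ∈ edges, e.1 ∈ nodes
  edge_tgt_mem : ∀ e ∈ edges, e.2.2 ∈ nodes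
  fwd_inv : ∀ n p n', (n, Step.fwd p, n') ∈ edges → (n', Step.inv p, n) ∈ edges
  inv_fwd : ∀ n p n', (n, Step.inv p, n') ∈ edges → (n', Step.fwd p, n) ∈ edges

/-- The neighbourhood of a node: all adjacent edges (with source that node). -/
def ShExGraph.neigh {N P V : Type} (G : ShExGraph N P V) (n : N) : Set (Edge N P) :=
  {e ∈ G.edges | e.1 = n}

/-- A forward edge: labelled by a (non-inverse) property. -/
def Edge.isFwd {N P : Type} (e : Edge N P) : Prop := ∃ p, e.2.1 = Step.fwd p

/-- An inverse edge: labelled by an inverse property. -/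
def Edge.isInv {N P : Type} (e : Edge N P) : Prop := ∃ p, e.2.1 = Step.inv p

/-- Atomic constraints of a value class: a value set, a shape label `T`,
or a negated shape label `!T`. -/
inductive Atom (L V : Type) where
  | valueSet (vs : Set V)
  | shape (T : L)
  | negShape (T : L)

/-- The content of a triple-constraint occurrence: its (possibly inverse)
property and its list of conjuncts. -/
structure TCContent (P L V : Type) where
  prop : Step P
  conjuncts : List (Atom L V)

/-- Shape expressions, with triple-constraint occurrences drawn from a type `C`
of occurrence names (distinct occurrences are distinguished). -/
inductive SExpr (C : Type) where
  | empty
  | tc (c : C)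
  | someOf (e₁ e₂ : SExpr C)
  | group (e₁ e₂ : SExpr C)
  | rep (e : SExpr C) (lo : ℕ) (hi : ℕ∞)

/-- The triple-constraint occurrence `c` occurs in a shape expression. -/
def occursIn {C : Type} (c : C) : SExpr C → Prop
  | .empty => False
  | .tc c' => c = c'
  | .someOf e₁ e₂ => occursIn c e₁ ∨ occursIn c e₂
  | .group e₁ e₂ => occursIn c e₁ ∨ occursIn c e₂
  | .rep e _ _ => occursIn c e

/-- Triple consumers: `tc c` for a triple-constraint occurrence `c`,
`extra q` for an extra (possibly inverse) property `q`, and `opn` (open). -/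
inductive Consumer (C P : Type) where
  | tc (c : C)
  | extra (q : Step P)
  | opn

/-- A shape definition: optional CLOSED / ^CLOSED flags, a finite set of extra
(possibly inverse) properties, and a shape expression. -/
structure ShapeDef (C P L V : Type) where
  closed : Bool
  invClosed : Bool
  extra : Set (Step P)
  extra_finite : extra.Finite
  expr : SExpr C

/-- A ShEx schema: a shape definition for every shape label, and the content
of every triple-constraint occurrence. -/
structure Schema (C P L V : Type) where
  defn : L → ShapeDef C P L V
  content : C → TCContent P L V

/-- The subset of `Neigh` of edges mapped to consumers of triple-constraint
occurrences occurring in the expression `e`. -/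
def exprEdges {N P C : Type} (w : Edge N P → Consumer C P) (e : SExpr C)
    (Neigh : Set (Edge N P)) : Set (Edge N P) :=
  {x ∈ Neigh | ∃ c, w x = Consumer.tc c ∧ occursIn c e}

/-- The satisfaction relation `witness, Neigh ⊢ Expr`. -/
def Sat {N P C : Type} (w : Edge N P → Consumer C P) : SExpr C → Set (Edge N P) → Prop
  | .empty, Neigh => Neigh = ∅
  | .tc c, Neigh => ∃ x, Neigh = {x} ∧ w x = Consumer.tc c
  | .someOf e₁ e₂, Neigh => Sat w e₁ Neigh ∨ Sat w e₂ Neigh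
  | .group e₁ e₂, Neigh =>
      Neigh = exprEdges w e₁ Neigh ∪ exprEdges w e₂ Neigh ∧
      Sat w e₁ (exprEdges w e₁ Neigh) ∧ Sat w e₂ (exprEdges w e₂ Neigh)
  | .rep e lo hi, Neigh => ∃ m : ℕ, lo ≤ m ∧ (m : ℕ∞) ≤ hi ∧
      ∃ f : Fin m → Set (Edge N P),
        (∀ i j, i ≠ j → Disjoint (f i) (f j)) ∧ (⋃ i, f i) = Neigh ∧
        ∀ i, Sat w e (f i)

/-- An edge matches the consumer of the triple-constraint occurrence `c`:
same property, and the target value belongs to every value-set conjunct. -/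
def matchesTC {N P C L V : Type} (val : N → V) (content : C → TCContent P L V)
    (e : Edge N P) (c : C) : Prop :=
  (content c).prop = e.2.1 ∧
  ∀ vs : Set V, Atom.valueSet vs ∈ (content c).conjuncts → val e.2.2 ∈ vs

/-- `w` is a local witness for the fact that node `n` satisfies the shape
definition `D` (in the graph `G`, with occurrence contents from `Sch`). -/
def IsLocalWitness {N P V C L : Type} (G : ShExGraph N P V) (Sch : Schema C P L V)
    (D : ShapeDef C P L V) (n : N) (w : Edge N P → Consumer C P) : Prop :=
  (∀ e ∈ G.neigh n,
    -- (i) consumers are consumers of D, and matched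
    (∀ c, w e = Consumer.tc c → occursIn c D.expr ∧ matchesTC G.val Sch.content e c) ∧
    (∀ q, w e = Consumer.extra q → q ∈ D.extra ∧ e.2.1 = q) ∧
    -- (ii) an extra-consumed edge matches no all-value-set triple constraint
    (∀ q, w e = Consumer.extra q →
      ¬ ∃ c, occursIn c D.expr ∧
        (∀ a ∈ (Sch.content c).conjuncts, ∃ vs, a = Atom.valueSet vs) ∧
        matchesTC G.val Sch.content e c) ∧
    -- (iii) an open-consumed edge has a property mentioned nowhere in D
    (w e = Consumer.opn →
      (¬ ∃ c, occursIn c D.expr ∧ (Sch.content c).prop = e.2.1) ∧ e.2.1 ∉ D.extra)) ∧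
  -- (iv) closedness conditions
  (D.closed = true → ∀ e ∈ G.neigh n, Edge.isFwd e → w e ≠ Consumer.opn) ∧
  (D.invClosed = true → ∀ e ∈ G.neigh n, Edge.isInv e → w e ≠ Consumer.opn) ∧
  -- (v) the triple-constraint-consumed edges satisfy the expression
  Sat w D.expr {e ∈ G.neigh n | ∃ c, w e = Consumer.tc c}

/-- A signed shape label: `(S, true)` is `S`, `(S, false)` is `!S`. -/
abbrev SLabel (L : Type) := L × Bool

/-- A typing candidate: a set of pairs of a node and a signed shape label. -/
abbrev Typing (N L : Type) := Set (N × SLabel L)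

/-- A family assigning a (candidate) local witness to every node and shape label. -/
abbrev LWFam (N P L C : Type) := N → L → Edge N P → Consumer C P

/-- A typing of `G`: only nodes of `G`, and no contradictory pairs. -/
def IsTyping {N P V L : Type} (G : ShExGraph N P V) (t : Typing N L) : Prop :=
  (∀ x ∈ t, x.1 ∈ G.nodes) ∧
  ∀ (n : N) (S : L), ¬ ((n, (S, true)) ∈ t ∧ (n, (S, false)) ∈ t)

/-- The signed shape label determined by an atomic constraint, if any. -/
def atomSigned {L V : Type} : Atom L V → Option (SLabel L)
  | .valueSet _ => none
  | .shape T => some (T, true)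
  | .negShape T => some (T, false)

/-- The propagation of a local witness with domain `Neigh`. -/
def propagation {N P C L V : Type} (Sch : Schema C P L V) (Neigh : Set (Edge N P))
    (w : Edge N P → Consumer C P) : Typing N L :=
  {x | ∃ e ∈ Neigh, ∃ c, w e = Consumer.tc c ∧ e.2.2 = x.1 ∧
       ∃ a ∈ (Sch.content c).conjuncts, atomSigned a = some x.2}

/-- One unfolding of the recursive definition of a global typing witness;
`Inner` stands for the inner (recursive) references to the notion of a global
typing witness in conditions gtw-neg and gtw-extra. -/
def GTWCond {N P V C L : Type} (G : ShExGraph N P V) (Sch : Schema C P L V)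
    (Inner : Typing N L → LWFam N P L C → Prop)
    (typing : Typing N L) (lw : LWFam N P L C) : Prop :=
  IsTyping G typing ∧
  -- lw gives local witnesses; (gtw-sat) propagation is included in the typing
  (∀ n S, (n, (S, true)) ∈ typing →
    IsLocalWitness G Sch (Sch.defn S) n (lw n S) ∧
    propagation Sch (G.neigh n) (lw n S) ⊆ typing) ∧
  -- (gtw-neg)
  (∀ n S, (n, (S, false)) ∈ typing → ¬ ∃ t' l', Inner t' l' ∧ (n, (S, true)) ∈ t') ∧
  -- (gtw-extra)
  (∀ n S, (n, (S, true)) ∈ typing → ∀ e ∈ G.neigh n, ∀ q, lw n S e = Consumer.extra q →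
    ∀ c, occursIn c (Sch.defn S).expr → (Sch.content c).prop = q →
      ∃ a ∈ (Sch.content c).conjuncts,
        (∃ vs, a = Atom.valueSet vs ∧ G.val e.2.2 ∉ vs) ∨
        (∃ T, a = Atom.shape T ∧ ∃ t'' l'', Inner t'' l'' ∧ (e.2.2, (T, false)) ∈ t'') ∨
        (∃ T, a = Atom.negShape T ∧ ∃ t'' l'', Inner t'' l'' ∧ (e.2.2, (T, true)) ∈ t''))

/-- `GTW` is *the* notion of global typing witness for `G` by `Sch`: a predicate
satisfying the recursive defining equations (which, for well-defined schemas,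
determine it uniquely). -/
def IsGTWFamily {N P V C L : Type} (G : ShExGraph N P V) (Sch : Schema C P L V)
    (GTW : Typing N L → LWFam N P L C → Prop) : Prop :=
  ∀ t l, GTW t l ↔ GTWCond G Sch GTW t l

/-- Edge of the dependency graph of a schema: `T` occurs in some triple
constraint of `expr(S)`. -/
def depEdge {C P L V : Type} (Sch : Schema C P L V) (S T : L) : Prop :=
  ∃ c, occursIn c (Sch.defn S).expr ∧
    (Atom.shape T ∈ (Sch.content c).conjuncts ∨
     Atom.negShape T ∈ (Sch.content c).conjuncts)

/-- `T` appears negated in some shape definition of the schema. -/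
def AppearsNegated {C P L V : Type} (Sch : Schema C P L V) (T : L) : Prop :=
  ∃ S c, occursIn c (Sch.defn S).expr ∧
    ((Atom.negShape T : Atom L V) ∈ (Sch.content c).conjuncts ∨
     ((Sch.content c).prop ∈ (Sch.defn S).extra ∧
      (Atom.shape T : Atom L V) ∈ (Sch.content c).conjuncts))

/-- Well-defined schema: from every shape label that appears negated, the
reachable part of the dependency graph is acyclic. -/
def WellDefined {C P L V : Type} (Sch : Schema C P L V) : Prop :=
  ∀ T, AppearsNegated Sch T →
    ∀ U, Relation.ReflTransGen (depEdge Sch) T U → ¬ Relation.TransGen (depEdge Sch) U U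

/-- A typing is total on negated shapes: every node of `G` is typed with `S`
or `!S` for every shape label `S` appearing negated in the schema. -/
def TotalOnNegated {N P V C L : Type} (G : ShExGraph N P V) (Sch : Schema C P L V)
    (t : Typing N L) : Prop :=
  ∀ n ∈ G.nodes, ∀ S, AppearsNegated Sch S →
    (n, (S, true)) ∈ t ∨ (n, (S, false)) ∈ t

/-! Condition gtw-neg makes any two global typing witnesses consistent with each other: none
contains `(n, !S)` while another contains `(n, S)`. So a witness that decides `S` at `n` already
holds whichever of `(n, S)`, `(n, !S)` any other witness contains. -/

section GlobalTypingWitness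

variable {N P V C L : Type} {G : ShExGraph N P V} {Sch : Schema C P L V}
  {GTW : Typing N L → LWFam N P L C → Prop}

theorem IsGTWFamily.not_mem_pos_of_mem_neg (hGTW : IsGTWFamily G Sch GTW)
    {t₁ t₂ : Typing N L} {l₁ l₂ : LWFam N P L C} (h₁ : GTW t₁ l₁) (h₂ : GTW t₂ l₂)
    {n : N} {S : L} (hneg : (n, (S, false)) ∈ t₁) : (n, (S, true)) ∉ t₂ :=
  fun hpos => ((hGTW t₁ l₁).mp h₁).2.2.1 n S hneg ⟨t₂, l₂, h₂, hpos⟩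

theorem IsGTWFamily.mem_of_mem_of_decides (hGTW : IsGTWFamily G Sch GTW)
    {t t₀ : Typing N L} {l l₀ : LWFam N P L C} (h : GTW t l) (h₀ : GTW t₀ l₀)
    {n : N} {S : L} (hdec : (n, (S, true)) ∈ t₀ ∨ (n, (S, false)) ∈ t₀) :
    ∀ b : Bool, (n, (S, b)) ∈ t → (n, (S, b)) ∈ t₀
  | true, hpos => hdec.resolve_right fun hneg => hGTW.not_mem_pos_of_mem_neg h₀ h hneg hpos
  | false, hneg => hdec.resolve_left (hGTW.not_mem_pos_of_mem_neg h h₀ hneg)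

end GlobalTypingWitness

theorem statement_1_general {N P V C L : Type}
    (G : ShExGraph N P V) (Sch : Schema C P L V)
    (GTW : Typing N L → LWFam N P L C → Prop) (hGTW : IsGTWFamily G Sch GTW)
    (tcert : Typing N L) (lwcert : LWFam N P L C)
    (hcert : GTW tcert lwcert) (htot : TotalOnNegated G Sch tcert) :
    ∀ (typing : Typing N L) (lw : LWFam N P L C), GTW typing lw →
      ∀ S, AppearsNegated Sch S → ∀ n ∈ G.nodes,
        ((n, (S, true)) ∈ typing → (n, (S, true)) ∈ tcert) ∧
        ((n, (S, false)) ∈ typing → (n, (S, false)) ∈ tcert) := by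
  intro typing lw htyp S hSneg n hn
  have hdec := htot n hn S hSneg
  exact ⟨hGTW.mem_of_mem_of_decides htyp hcert hdec true,
    hGTW.mem_of_mem_of_decides htyp hcert hdec false⟩

/-- Corollary: every global typing witness agrees with the
certain typing `typing_cert` (total on negated shapes) on the shape labels that
appear negated in the schema. -/
theorem statement_1 {N P V C L : Type} [Finite L]
    (G : ShExGraph N P V) (Sch : Schema C P L V) (hwd : WellDefined Sch)
    (GTW : Typing N L → LWFam N P L C → Prop) (hGTW : IsGTWFamily G Sch GTW)
    (tcert : Typing N L) (lwcert : LWFam N P L C)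
    (hcert : GTW tcert lwcert) (htot : TotalOnNegated G Sch tcert) :
    ∀ (typing : Typing N L) (lw : LWFam N P L C), GTW typing lw →
      ∀ S, AppearsNegated Sch S → ∀ n ∈ G.nodes,
        ((n, (S, true)) ∈ typing → (n, (S, true)) ∈ tcert) ∧
        ((n, (S, false)) ∈ typing → (n, (S, false)) ∈ tcert) :=
  statement_1_general G Sch GTW hGTW tcert lwcert hcert htot
end

section
/- Let G be a finite graph and Sch a well-defined ShEx schema. If (typing1, lw1) and (typing2, lw2) are two global typing witnesses for G by Sch that are both total on negated shapes (for every node n and every S ∈ negated-shapes(Sch), each of typing1 and typing2 contains (n, S) or (n, !S)), then they agree on the negated shapes: for every node n and every S ∈ negated-shapes(Sch), (n, S) ∈ typing1 if and only if (n, S) ∈ typing2, and (n, !S) ∈ typing1 if and only if (n, !S) ∈ typing2. -/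
namespace IsGTWFamily

variable {N P V C L : Type} {G : ShExGraph N P V} {Sch : Schema C P L V}
  {GTW : Typing N L → LWFam N P L C → Prop} {t₁ t₂ : Typing N L} {l₁ l₂ : LWFam N P L C}
  {n : N} {S : L}

-- This is condition (gtw-neg) of the first witness, applied to the second.
theorem not_mem_pos_of_mem_neg_s2 (hGTW : IsGTWFamily G Sch GTW)
    (h₁ : GTW t₁ l₁) (h₂ : GTW t₂ l₂) (hneg : (n, (S, false)) ∈ t₁) :
    (n, (S, true)) ∉ t₂ := fun hpos =>
  ((hGTW t₁ l₁).mp h₁).2.2.1 n S hneg ⟨t₂, l₂, h₂, hpos⟩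

theorem mem_pos_of_mem_pos (hGTW : IsGTWFamily G Sch GTW)
    (h₁ : GTW t₁ l₁) (h₂ : GTW t₂ l₂)
    (htot : (n, (S, true)) ∈ t₂ ∨ (n, (S, false)) ∈ t₂) (hpos : (n, (S, true)) ∈ t₁) :
    (n, (S, true)) ∈ t₂ :=
  htot.resolve_right fun hneg => hGTW.not_mem_pos_of_mem_neg_s2 h₂ h₁ hneg hpos

theorem mem_neg_of_mem_neg (hGTW : IsGTWFamily G Sch GTW)
    (h₁ : GTW t₁ l₁) (h₂ : GTW t₂ l₂)
    (htot : (n, (S, true)) ∈ t₂ ∨ (n, (S, false)) ∈ t₂) (hneg : (n, (S, false)) ∈ t₁) :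
    (n, (S, false)) ∈ t₂ :=
  htot.resolve_left (hGTW.not_mem_pos_of_mem_neg_s2 h₁ h₂ hneg)

end IsGTWFamily

theorem statement_2_general {N P V C L : Type}
    (G : ShExGraph N P V) (Sch : Schema C P L V)
    (GTW : Typing N L → LWFam N P L C → Prop) (hGTW : IsGTWFamily G Sch GTW)
    (t₁ t₂ : Typing N L) (l₁ l₂ : LWFam N P L C)
    (h₁ : GTW t₁ l₁) (h₂ : GTW t₂ l₂)
    (htot₁ : TotalOnNegated G Sch t₁) (htot₂ : TotalOnNegated G Sch t₂) :
    ∀ n ∈ G.nodes, ∀ S, AppearsNegated Sch S →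
      (((n, (S, true)) ∈ t₁ ↔ (n, (S, true)) ∈ t₂) ∧
       ((n, (S, false)) ∈ t₁ ↔ (n, (S, false)) ∈ t₂)) := by
  intro n hn S hS
  have htot₁ := htot₁ n hn S hS
  have htot₂ := htot₂ n hn S hS
  exact ⟨⟨hGTW.mem_pos_of_mem_pos h₁ h₂ htot₂, hGTW.mem_pos_of_mem_pos h₂ h₁ htot₁⟩,
    ⟨hGTW.mem_neg_of_mem_neg h₁ h₂ htot₂, hGTW.mem_neg_of_mem_neg h₂ h₁ htot₁⟩⟩

/-- two global typing witnesses that are both total on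
negated shapes agree on the negated shapes. -/
theorem statement_2 {N P V C L : Type} [Finite L]
    (G : ShExGraph N P V) (Sch : Schema C P L V) (hwd : WellDefined Sch)
    (GTW : Typing N L → LWFam N P L C → Prop) (hGTW : IsGTWFamily G Sch GTW)
    (t₁ t₂ : Typing N L) (l₁ l₂ : LWFam N P L C)
    (h₁ : GTW t₁ l₁) (h₂ : GTW t₂ l₂)
    (htot₁ : TotalOnNegated G Sch t₁) (htot₂ : TotalOnNegated G Sch t₂) :
    ∀ n ∈ G.nodes, ∀ S, AppearsNegated Sch S →
      (((n, (S, true)) ∈ t₁ ↔ (n, (S, true)) ∈ t₂) ∧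
       ((n, (S, false)) ∈ t₁ ↔ (n, (S, false)) ∈ t₂)) :=
  statement_2_general G Sch GTW hGTW t₁ t₂ l₁ l₂ h₁ h₂ htot₁ htot₂
end

section
/- Let G be a finite graph, Sch a well-defined ShEx schema, and S a shape label such that no shape label occurs in definition(S) (neither in expr(S) nor, consequently, as a shape-constraint conjunct of any triple constraint whose property is extra); i.e. S is a sink of the dependency graph. Define typing_S to contain, for each node n of G, the pair (n, S) if there exists a local witness for the fact that n satisfies definition(S), and the pair (n, !S) otherwise, and let lw_S assign to each (n, S) ∈ typing_S such a local witness. Then (typing_S, lw_S) is a global typing witness for G by Sch. -/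
/-! As no shape label occurs in `definition(S)`, a local witness for `S` propagates nothing
(gtw-sat), and every triple constraint of `S` consists of value sets only, so condition (ii) of a
local witness already yields gtw-extra. A global typing witness containing `(n, S)` carries a
local witness for `n`, so `(n, !S)` is only assigned where none can exist (gtw-neg). -/

theorem Atom.exists_eq_valueSet {L V : Type} {a : Atom L V}
    (h : ∀ T : L, a ≠ Atom.shape T ∧ a ≠ Atom.negShape T) : ∃ vs, a = Atom.valueSet vs := by
  cases a with
  | valueSet vs => exact ⟨vs, rfl⟩
  | shape T => exact absurd rfl (h T).1
  | negShape T => exact absurd rfl (h T).2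

section LocalWitness

variable {N P V C L : Type} {G : ShExGraph N P V} {Sch : Schema C P L V}
  {D : ShapeDef C P L V} {n : N} {w : Edge N P → Consumer C P}

theorem IsLocalWitness.propagation_eq_empty (hw : IsLocalWitness G Sch D n w)
    (hD : ∀ c, occursIn c D.expr →
      ∀ a ∈ (Sch.content c).conjuncts, ∀ T : L, a ≠ Atom.shape T ∧ a ≠ Atom.negShape T) :
    propagation Sch (G.neigh n) w = ∅ := by
  refine Set.eq_empty_of_forall_notMem ?_
  rintro x ⟨e, he, c, hc, -, a, ha, hsigned⟩
  obtain ⟨vs, rfl⟩ := Atom.exists_eq_valueSet (hD c ((hw.1 e he).1 c hc).1 a ha)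
  simp [atomSigned] at hsigned

theorem IsLocalWitness.exists_valueSet_not_mem_of_extra (hw : IsLocalWitness G Sch D n w)
    {e : Edge N P} (he : e ∈ G.neigh n) {q : Step P} (hq : w e = Consumer.extra q)
    {c : C} (hc : occursIn c D.expr) (hprop : (Sch.content c).prop = q)
    (hvs : ∀ a ∈ (Sch.content c).conjuncts, ∃ vs, a = Atom.valueSet vs) :
    ∃ vs, Atom.valueSet vs ∈ (Sch.content c).conjuncts ∧ G.val e.2.2 ∉ vs := by
  have hlabel : e.2.1 = q := ((hw.1 e he).2.1 q hq).2
  have hnomatch : ¬ matchesTC G.val Sch.content e c :=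
    fun hm => (hw.1 e he).2.2.1 q hq ⟨c, hc, hvs, hm⟩
  simp only [matchesTC, hprop, hlabel, true_and] at hnomatch
  push Not at hnomatch
  exact hnomatch

end LocalWitness

theorem IsGTWFamily.exists_localWitness {N P V C L : Type} {G : ShExGraph N P V}
    {Sch : Schema C P L V} {GTW : Typing N L → LWFam N P L C → Prop}
    (hGTW : IsGTWFamily G Sch GTW) {t : Typing N L} {l : LWFam N P L C} (ht : GTW t l)
    {n : N} {S : L} (hn : (n, (S, true)) ∈ t) :
    ∃ w, IsLocalWitness G Sch (Sch.defn S) n w :=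
  ⟨l n S, (((hGTW t l).mp ht).2.1 n S hn).1⟩

section LocalTyping

variable {N P V C L : Type}

def localTyping (G : ShExGraph N P V) (Sch : Schema C P L V) (S : L) : Typing N L :=
  {x | x.1 ∈ G.nodes ∧
    ((x.2 = (S, true) ∧ ∃ w, IsLocalWitness G Sch (Sch.defn S) x.1 w) ∨
     (x.2 = (S, false) ∧ ¬ ∃ w, IsLocalWitness G Sch (Sch.defn S) x.1 w))}

variable {G : ShExGraph N P V} {Sch : Schema C P L V} {S S' : L} {n : N}

theorem mem_localTyping_true :
    (n, (S', true)) ∈ localTyping G Sch S ↔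
      n ∈ G.nodes ∧ S' = S ∧ ∃ w, IsLocalWitness G Sch (Sch.defn S) n w := by
  simp [localTyping]

theorem mem_localTyping_false :
    (n, (S', false)) ∈ localTyping G Sch S ↔
      n ∈ G.nodes ∧ S' = S ∧ ¬ ∃ w, IsLocalWitness G Sch (Sch.defn S) n w := by
  simp [localTyping]

theorem isTyping_localTyping : IsTyping G (localTyping G Sch S) := by
  refine ⟨fun x hx => hx.1, fun n S' ⟨hpos, hneg⟩ => ?_⟩
  exact (mem_localTyping_false.mp hneg).2.2 (mem_localTyping_true.mp hpos).2.2

end LocalTyping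

theorem statement_4_general {N P V C L : Type}
    (G : ShExGraph N P V) (Sch : Schema C P L V)
    (GTW : Typing N L → LWFam N P L C → Prop) (hGTW : IsGTWFamily G Sch GTW)
    (S : L)
    (hsink : ∀ c, occursIn c (Sch.defn S).expr →
      ∀ a ∈ (Sch.content c).conjuncts, ∀ T : L, a ≠ Atom.shape T ∧ a ≠ Atom.negShape T)
    (lw : LWFam N P L C)
    (hlw : ∀ n ∈ G.nodes, (∃ w, IsLocalWitness G Sch (Sch.defn S) n w) →
      IsLocalWitness G Sch (Sch.defn S) n (lw n S)) :
    GTW {x : N × SLabel L | x.1 ∈ G.nodes ∧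
        ((x.2 = (S, true) ∧ ∃ w, IsLocalWitness G Sch (Sch.defn S) x.1 w) ∨
         (x.2 = (S, false) ∧ ¬ ∃ w, IsLocalWitness G Sch (Sch.defn S) x.1 w))} lw := by
  change GTW (localTyping G Sch S) lw
  have hlw' : ∀ n S', (n, (S', true)) ∈ localTyping G Sch S →
      S' = S ∧ IsLocalWitness G Sch (Sch.defn S) n (lw n S) := fun n S' h =>
    have ⟨hn, hS, hw⟩ := mem_localTyping_true.mp h
    ⟨hS, hlw n hn hw⟩
  rw [hGTW]
  refine ⟨isTyping_localTyping, ?sat, ?neg, ?extra⟩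
  case sat =>
    intro n S' h
    obtain ⟨rfl, hw⟩ := hlw' n S' h
    exact ⟨hw, (hw.propagation_eq_empty hsink).symm ▸ Set.empty_subset _⟩
  case neg =>
    rintro n S' h ⟨t', l', ht', hmem⟩
    obtain ⟨-, rfl, hnone⟩ := mem_localTyping_false.mp h
    exact hnone (hGTW.exists_localWitness ht' hmem)
  case extra =>
    intro n S' h e he q hq c hc hprop
    obtain ⟨rfl, hw⟩ := hlw' n S' h
    obtain ⟨vs, hmem, hval⟩ := hw.exists_valueSet_not_mem_of_extra he hq hc hprop
      fun a ha => Atom.exists_eq_valueSet (hsink c hc a ha)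
    exact ⟨_, hmem, Or.inl ⟨vs, rfl, hval⟩⟩

/-- for a shape label `S` that is a sink of the dependency
graph (no shape label occurs in `definition(S)`), the typing which assigns
`(n, S)` to each node admitting a local witness for `definition(S)` and
`(n, !S)` to every other node, together with a choice of such local witnesses,
is a global typing witness for `G` by `Sch`. -/
theorem statement_4 {N P V C L : Type} [Finite L]
    (G : ShExGraph N P V) (Sch : Schema C P L V) (hwd : WellDefined Sch)
    (GTW : Typing N L → LWFam N P L C → Prop) (hGTW : IsGTWFamily G Sch GTW)
    (S : L)
    (hsink : ∀ c, occursIn c (Sch.defn S).expr →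
      ∀ a ∈ (Sch.content c).conjuncts, ∀ T : L, a ≠ Atom.shape T ∧ a ≠ Atom.negShape T)
    (lw : LWFam N P L C)
    (hlw : ∀ n ∈ G.nodes, (∃ w, IsLocalWitness G Sch (Sch.defn S) n w) →
      IsLocalWitness G Sch (Sch.defn S) n (lw n S)) :
    GTW {x : N × SLabel L | x.1 ∈ G.nodes ∧
        ((x.2 = (S, true) ∧ ∃ w, IsLocalWitness G Sch (Sch.defn S) x.1 w) ∨
         (x.2 = (S, false) ∧ ¬ ∃ w, IsLocalWitness G Sch (Sch.defn S) x.1 w))} lw :=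
  statement_4_general G Sch GTW hGTW S hsink lw hlw
end

section
/- Let E be a shape expression and min ≤ max natural numbers (max finite). Let U be the group shape expression consisting of min copies of E followed by (max − min) copies of E[0;1], where each copy uses fresh, pairwise distinct triple-constraint occurrences that are renamings of those of E, and let π be the map sending each consumer of a copied occurrence back to the consumer of the original occurrence in E. Then for every set Neigh of neighbourhood edges: there exists a map witness from Neigh to the consumers of the occurrences of E such that witness, Neigh ⊢ E[min;max] if and only if there exists a map witness' from Neigh to the consumers of the occurrences of U such that witness', Neigh ⊢ U; moreover witness can be taken to be π ∘ witness'. -/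
/-- Renaming of triple-constraint occurrences in a shape expression. -/
def SExpr.rename {C C' : Type} (f : C → C') : SExpr C → SExpr C'
  | .empty => .empty
  | .tc c => .tc (f c)
  | .someOf e₁ e₂ => .someOf (rename f e₁) (rename f e₂)
  | .group e₁ e₂ => .group (rename f e₁) (rename f e₂)
  | .rep e lo hi => .rep (rename f e) lo hi

/-- Renaming of occurrences in a triple consumer. -/
def Consumer.rename {C C' P : Type} (f : C → C') : Consumer C P → Consumer C' P
  | .tc c => .tc (f c)
  | .extra q => .extra q
  | .opn => .opn

/-- Group of a list of shape expressions. -/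
def groupList {C : Type} : List (SExpr C) → SExpr C
  | [] => .empty
  | [e] => e
  | e :: es => .group e (groupList es)

/-- The unfolding of the repetition `E[lo;hi]` (with `hi` finite): the group of
`lo` copies of `E` followed by `hi - lo` copies of `E[0;1]`, each copy using
fresh pairwise distinct occurrences `(i, c)` renaming the occurrences `c` of
`E`; the projection `Prod.snd` sends each copied occurrence back to the
original one. -/
def unfoldExpr {C : Type} (E : SExpr C) (lo hi : ℕ) : SExpr (Fin hi × C) :=
  groupList ((List.finRange hi).map fun i =>
    if i.val < lo then E.rename (fun c => (i, c))
    else SExpr.rep (E.rename fun c => (i, c)) 0 1)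

/-! A witness for the unfolding splits the neighbourhood into the blocks consumed by the
individual copies. The copy index recorded in each consumer makes these blocks pairwise disjoint;
mandatory copies match `E` and optional ones match `E` or are empty, so projecting the index away
matches `E[lo;hi]` once the empty optional blocks are discarded. Conversely, a match of `E[lo;hi]`
by `m` blocks, padded with `hi - m` empty ones, becomes a witness for the unfolding by tagging the
consumer of every edge with the index of its block. -/

open Function

section Satisfaction

variable {N P C C' : Type}

lemma occursIn_rename {f : C → C'} {c' : C'} {e : SExpr C} :
    occursIn c' (e.rename f) ↔ ∃ c, occursIn c e ∧ c' = f c := by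
  induction e with
  | empty => simp [SExpr.rename, occursIn]
  | tc c => simp [SExpr.rename, occursIn]
  | someOf e₁ e₂ ih₁ ih₂ | group e₁ e₂ ih₁ ih₂ =>
    simp only [SExpr.rename, occursIn, ih₁, ih₂, or_and_right, exists_or]
  | rep e lo hi ih => exact ih

lemma occursIn_groupList {c : C} :
    ∀ {es : List (SExpr C)}, occursIn c (groupList es) ↔ ∃ e ∈ es, occursIn c e
  | [] => by simp [groupList, occursIn]
  | [e] => by simp [groupList]
  | e :: e₂ :: es => by simp [groupList, occursIn, occursIn_groupList (es := e₂ :: es)]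

lemma Consumer.rename_eq_tc_iff {f : C → C'} (hf : Injective f) {a : Consumer C P} {c : C} :
    a.rename f = .tc (f c) ↔ a = .tc c := by
  cases a <;> simp [Consumer.rename, hf.eq_iff]

lemma exprEdges_subset (w : Edge N P → Consumer C P) (e : SExpr C) (X : Set (Edge N P)) :
    exprEdges w e X ⊆ X :=
  Set.sep_subset X _

lemma exprEdges_exprEdges {w : Edge N P → Consumer C P} {e e' : SExpr C}
    (h : ∀ c, occursIn c e → occursIn c e') (X : Set (Edge N P)) :
    exprEdges w e (exprEdges w e' X) = exprEdges w e X := by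
  ext x
  constructor
  · rintro ⟨⟨hx, _⟩, hc⟩
    exact ⟨hx, hc⟩
  · rintro ⟨hx, c, hc, ho⟩
    exact ⟨⟨hx, c, hc, h c ho⟩, c, hc, ho⟩

lemma exprEdges_groupList (w : Edge N P → Consumer C P) (es : List (SExpr C))
    (X : Set (Edge N P)) :
    exprEdges w (groupList es) X = ⋃ e ∈ es, exprEdges w e X := by
  ext x
  simp only [exprEdges, Set.mem_ofPred_eq, Set.mem_iUnion, occursIn_groupList, exists_prop]
  aesop

lemma exprEdges_rename {f : C → C'} (hf : Injective f) (w : Edge N P → Consumer C P)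
    (e : SExpr C) (X : Set (Edge N P)) :
    exprEdges (fun x => (w x).rename f) (e.rename f) X = exprEdges w e X := by
  ext x
  simp only [exprEdges, Set.mem_ofPred_eq, occursIn_rename]
  refine and_congr_right fun _ => ⟨?_, ?_⟩
  · rintro ⟨_, hw, c, hc, rfl⟩
    exact ⟨c, (Consumer.rename_eq_tc_iff hf).1 hw, hc⟩
  · rintro ⟨c, hw, hc⟩
    exact ⟨f c, by rw [hw]; rfl, c, hc, rfl⟩

lemma exprEdges_congr {w w₂ : Edge N P → Consumer C P} {X : Set (Edge N P)}
    (h : Set.EqOn w w₂ X) (e : SExpr C) : exprEdges w e X = exprEdges w₂ e X :=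
  Set.sep_ext_iff.2 fun x hx => by rw [h hx]

lemma Sat.consumed {w : Edge N P → Consumer C P} {e : SExpr C} {X : Set (Edge N P)}
    (h : Sat w e X) : ∀ x ∈ X, ∃ c, occursIn c e ∧ w x = .tc c := by
  induction e generalizing X with
  | empty => simp_all [Sat]
  | tc c =>
    obtain ⟨y, rfl, hy⟩ := h
    rintro x rfl
    exact ⟨c, rfl, hy⟩
  | someOf e₁ e₂ ih₁ ih₂ =>
    rcases h with h | h
    · exact fun x hx => (ih₁ h x hx).imp fun _ => And.imp_left Or.inl
    · exact fun x hx => (ih₂ h x hx).imp fun _ => And.imp_left Or.inr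
  | group e₁ e₂ =>
    intro x hx
    rcases h.1 ▸ hx with ⟨-, c, hc, ho⟩ | ⟨-, c, hc, ho⟩
    exacts [⟨c, Or.inl ho, hc⟩, ⟨c, Or.inr ho, hc⟩]
  | rep e lo hi ih =>
    obtain ⟨m, -, -, f, -, rfl, hf⟩ := h
    intro x hx
    obtain ⟨i, hxi⟩ := Set.mem_iUnion.1 hx
    exact ih (hf i) x hxi

lemma Sat.exprEdges_eq {w : Edge N P → Consumer C P} {e : SExpr C} {X : Set (Edge N P)}
    (h : Sat w e X) : exprEdges w e X = X :=
  Set.sep_eq_self_iff_mem_true.2 fun x hx =>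
    let ⟨c, ho, hc⟩ := h.consumed x hx
    ⟨c, hc, ho⟩

lemma sat_of_eqOn {w w₂ : Edge N P → Consumer C P} {e : SExpr C} {X : Set (Edge N P)}
    (hw : Set.EqOn w w₂ X) (h : Sat w e X) : Sat w₂ e X := by
  induction e generalizing X with
  | empty => exact h
  | tc c =>
    obtain ⟨x, rfl, hx⟩ := h
    exact ⟨x, rfl, hw rfl ▸ hx⟩
  | someOf e₁ e₂ ih₁ ih₂ => exact h.imp (ih₁ hw) (ih₂ hw)
  | group e₁ e₂ ih₁ ih₂ =>
    obtain ⟨hX, h₁, h₂⟩ := h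
    simp only [exprEdges_congr hw] at hX h₁ h₂
    exact ⟨hX, ih₁ (hw.mono (exprEdges_subset _ _ _)) h₁,
      ih₂ (hw.mono (exprEdges_subset _ _ _)) h₂⟩
  | rep e lo hi ih =>
    obtain ⟨m, hlo, hhi, f, hdisj, rfl, hf⟩ := h
    exact ⟨m, hlo, hhi, f, hdisj, rfl, fun i => ih (hw.mono (Set.subset_iUnion f i)) (hf i)⟩

theorem sat_rename_iff {f : C → C'} (hf : Injective f) {w : Edge N P → Consumer C P}
    {e : SExpr C} {X : Set (Edge N P)} :
    Sat (fun x => (w x).rename f) (e.rename f) X ↔ Sat w e X := by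
  induction e generalizing X with
  | empty => rfl
  | tc c => simp only [Sat, SExpr.rename, Consumer.rename_eq_tc_iff hf]
  | someOf e₁ e₂ ih₁ ih₂ => exact or_congr ih₁ ih₂
  | group e₁ e₂ ih₁ ih₂ => simp only [Sat, SExpr.rename, exprEdges_rename hf, ih₁, ih₂]
  | rep e lo hi ih => simp only [Sat, SExpr.rename, ih]

/-- On edges consumed by renamed occurrences, `w'` is the renaming of its own projection. -/
theorem sat_unrename {f : C → C'} {g : C' → C} (hgf : LeftInverse g f)
    {w' : Edge N P → Consumer C' P} {e : SExpr C} {X : Set (Edge N P)}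
    (h : Sat w' (e.rename f) X) : Sat (fun x => (w' x).rename g) e X := by
  refine (sat_rename_iff hgf.injective).1 (sat_of_eqOn (fun x hx => ?_) h)
  obtain ⟨_, ho, hx⟩ := h.consumed x hx
  obtain ⟨c, -, rfl⟩ := occursIn_rename.1 ho
  simp only [hx, Consumer.rename, hgf c]

lemma biUnion_list_cons {α β : Type*} (f : α → Set β) (a : α) (l : List α) :
    ⋃ e ∈ a :: l, f e = f a ∪ ⋃ e ∈ l, f e := by
  simp [Set.iUnion_or, Set.iUnion_union_distrib, Set.iUnion_iUnion_eq_left]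

theorem sat_groupList_iff {w : Edge N P → Consumer C P} :
    ∀ {es : List (SExpr C)} {X : Set (Edge N P)},
      Sat w (groupList es) X ↔
        X = ⋃ e ∈ es, exprEdges w e X ∧ ∀ e ∈ es, Sat w e (exprEdges w e X)
  | [], X => by simp [groupList, Sat]
  | [e], X => by
    show Sat w e X ↔ _
    simp only [List.mem_singleton, forall_eq, Set.iUnion_iUnion_eq_left]
    refine ⟨fun h => ⟨h.exprEdges_eq.symm, h.exprEdges_eq.symm ▸ h⟩, fun ⟨hX, h⟩ => ?_⟩
    rwa [← hX] at h
  | e :: e₂ :: es, X => by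
    have key : ∀ e' ∈ e₂ :: es,
        exprEdges w e' (exprEdges w (groupList (e₂ :: es)) X) = exprEdges w e' X :=
      fun e' he' => exprEdges_exprEdges (fun c hc => occursIn_groupList.2 ⟨e', he', hc⟩) X
    have hrest : Sat w (groupList (e₂ :: es)) (exprEdges w (groupList (e₂ :: es)) X) ↔
        ∀ e' ∈ e₂ :: es, Sat w e' (exprEdges w e' X) := by
      rw [sat_groupList_iff, Set.iUnion₂_congr key, ← exprEdges_groupList, eq_self, true_and]
      exact forall₂_congr fun e' he' => by rw [key e' he']
    show (X = _ ∪ _ ∧ _ ∧ _) ↔ _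
    rw [hrest, biUnion_list_cons, exprEdges_groupList]
    simp only [List.forall_mem_cons]

lemma sat_rep_zero_one_iff {w : Edge N P → Consumer C P} {e : SExpr C} {X : Set (Edge N P)} :
    Sat w (.rep e 0 1) X ↔ X = ∅ ∨ Sat w e X := by
  constructor
  · rintro ⟨m, -, hm, f, -, rfl, hf⟩
    obtain rfl | rfl : m = 0 ∨ m = 1 := by
      have : m ≤ 1 := by exact_mod_cast hm
      omega
    · exact Or.inl (Set.iUnion_of_empty f)
    · rw [show ⋃ i, f i = f 0 from iSup_unique f]
      exact Or.inr (hf 0)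
  · rintro (rfl | h)
    · exact ⟨0, le_rfl, zero_le, Fin.elim0, fun i => i.elim0, Set.iUnion_of_empty _,
        fun i => i.elim0⟩
    · exact ⟨1, zero_le, le_rfl, fun _ => X, fun i j hij => (hij (Subsingleton.elim i j)).elim,
        Set.iUnion_const X, fun _ => h⟩

lemma sat_rep_of_iUnion {ι : Type} [Fintype ι] {w : Edge N P → Consumer C P} {e : SExpr C}
    {lo : ℕ} {hi : ℕ∞} {X : Set (Edge N P)} {S : ι → Set (Edge N P)}
    (hdisj : Pairwise (Disjoint on S)) (hX : ⋃ i, S i = X) (hS : ∀ i, Sat w e (S i))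
    (hlo : lo ≤ Fintype.card ι) (hhi : (Fintype.card ι : ℕ∞) ≤ hi) : Sat w (.rep e lo hi) X :=
  let σ := (Fintype.equivFin ι).symm
  ⟨_, hlo, hhi, S ∘ σ, fun _ _ hij => hdisj (σ.injective.ne hij), (σ.iSup_comp (g := S)).trans hX,
    fun _ => hS _⟩

theorem exists_blocks_of_sat_rep {w : Edge N P → Consumer C P} {e : SExpr C} {lo hi : ℕ}
    {X : Set (Edge N P)} (h : Sat w (.rep e lo hi) X) :
    ∃ S : Fin hi → Set (Edge N P), Pairwise (Disjoint on S) ∧ ⋃ i, S i = X ∧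
      ∀ i, Sat w e (S i) ∨ (lo ≤ i ∧ S i = ∅) := by
  obtain ⟨m, hlo, hm, f, hdisj, rfl, hf⟩ := h
  have hm : m ≤ hi := by exact_mod_cast hm
  refine ⟨fun i => if h : (i : ℕ) < m then f ⟨i, h⟩ else ∅, fun i j hij => ?_, ?_, fun i => ?_⟩
  · simp only [onFun]
    split_ifs
    · exact hdisj _ _ (by simpa [Fin.ext_iff] using hij)
    all_goals simp
  · ext x
    simp only [Set.mem_iUnion]
    constructor
    · rintro ⟨i, hx⟩
      split_ifs at hx
      exacts [⟨_, hx⟩, hx.elim]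
    · rintro ⟨j, hx⟩
      exact ⟨Fin.castLE hm j, by simp [j.2, hx]⟩
  · dsimp only
    split_ifs with h
    · exact Or.inl (hf _)
    · exact Or.inr ⟨hlo.trans (not_lt.1 h), rfl⟩

theorem sat_rep_of_blocks {w : Edge N P → Consumer C P} {e : SExpr C} {lo hi : ℕ}
    (hle : lo ≤ hi) {X : Set (Edge N P)} {S : Fin hi → Set (Edge N P)}
    (hdisj : Pairwise (Disjoint on S)) (hX : ⋃ i, S i = X)
    (hS : ∀ i, Sat w e (S i) ∨ (lo ≤ i ∧ S i = ∅)) : Sat w (.rep e lo hi) X := by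
  classical
  let ι := {i : Fin hi // (i : ℕ) < lo ∨ (S i).Nonempty}
  refine sat_rep_of_iUnion (S := fun i : ι => S i)
    (fun i j hij => hdisj (Subtype.coe_injective.ne hij)) ?_ (fun ⟨i, hi⟩ => ?_) ?_ ?_
  · rw [← hX]
    ext x
    simp only [Set.mem_iUnion]
    exact ⟨fun ⟨i, hx⟩ => ⟨i, hx⟩, fun ⟨i, hx⟩ => ⟨⟨i, Or.inr ⟨x, hx⟩⟩, hx⟩⟩
  · refine (hS i).resolve_right fun ⟨hlo, hempty⟩ => ?_
    rcases hi with hi | hi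
    · omega
    · simp [hempty] at hi
  · calc lo = Fintype.card (Fin lo) := (Fintype.card_fin lo).symm
      _ ≤ Fintype.card ι :=
        Fintype.card_le_of_injective (fun j => ⟨Fin.castLE hle j, Or.inl j.2⟩)
          fun a b h => Fin.castLE_injective hle (congrArg Subtype.val h)
  · exact_mod_cast (Fintype.card_subtype_le _).trans (Fintype.card_fin hi).le

end Satisfaction

section Unfolding

variable {N P C : Type} {E : SExpr C} {lo hi : ℕ}

def unfoldCopy (E : SExpr C) (lo : ℕ) {hi : ℕ} (i : Fin hi) : SExpr (Fin hi × C) :=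
  if (i : ℕ) < lo then E.rename (Prod.mk i) else .rep (E.rename (Prod.mk i)) 0 1

lemma unfoldExpr_eq_groupList :
    unfoldExpr E lo hi = groupList ((List.finRange hi).map (unfoldCopy E lo)) :=
  rfl

lemma occursIn_unfoldCopy {i : Fin hi} {c' : Fin hi × C} :
    occursIn c' (unfoldCopy E lo i) ↔ c'.1 = i ∧ occursIn c'.2 E := by
  have : occursIn c' (E.rename (Prod.mk i)) ↔ c'.1 = i ∧ occursIn c'.2 E := by
    obtain ⟨j, c⟩ := c'
    simp [occursIn_rename, and_comm, eq_comm]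
  unfold unfoldCopy
  split_ifs <;> exact this

lemma mem_exprEdges_unfoldCopy {w' : Edge N P → Consumer (Fin hi × C) P} {X : Set (Edge N P)}
    {i : Fin hi} {x : Edge N P} :
    x ∈ exprEdges w' (unfoldCopy E lo i) X ↔ x ∈ X ∧ ∃ c, occursIn c E ∧ w' x = .tc (i, c) := by
  simp only [exprEdges, Set.mem_ofPred_eq, occursIn_unfoldCopy, Prod.exists]
  aesop

lemma sat_unfoldCopy_iff {w' : Edge N P → Consumer (Fin hi × C) P} {Y : Set (Edge N P)}
    {i : Fin hi} :
    Sat w' (unfoldCopy E lo i) Y ↔ Sat w' (E.rename (Prod.mk i)) Y ∨ (lo ≤ i ∧ Y = ∅) := by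
  unfold unfoldCopy
  split_ifs with h
  · simp [h]
  · rw [sat_rep_zero_one_iff]
    simp [not_lt.1 h, or_comm]

theorem sat_unfoldExpr_iff {w' : Edge N P → Consumer (Fin hi × C) P} {X : Set (Edge N P)} :
    Sat w' (unfoldExpr E lo hi) X ↔
      X = ⋃ i, exprEdges w' (unfoldCopy E lo i) X ∧
        ∀ i, Sat w' (unfoldCopy E lo i) (exprEdges w' (unfoldCopy E lo i) X) := by
  simp [unfoldExpr_eq_groupList, sat_groupList_iff]

lemma pairwise_disjoint_exprEdges_unfoldCopy {w' : Edge N P → Consumer (Fin hi × C) P}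
    {X : Set (Edge N P)} : Pairwise (Disjoint on fun i => exprEdges w' (unfoldCopy E lo i) X) := by
  intro i j hij
  refine Set.disjoint_left.2 fun x hi hj => hij ?_
  obtain ⟨-, c, -, hc⟩ := mem_exprEdges_unfoldCopy.1 hi
  obtain ⟨-, c₂, -, hc₂⟩ := mem_exprEdges_unfoldCopy.1 hj
  exact congrArg Prod.fst (Consumer.tc.inj (hc.symm.trans hc₂))

theorem sat_rep_of_sat_unfoldExpr (hle : lo ≤ hi) {w' : Edge N P → Consumer (Fin hi × C) P}
    {X : Set (Edge N P)} (h : Sat w' (unfoldExpr E lo hi) X) :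
    Sat (fun x => (w' x).rename Prod.snd) (.rep E lo hi) X := by
  obtain ⟨hX, hcopy⟩ := sat_unfoldExpr_iff.1 h
  refine sat_rep_of_blocks hle pairwise_disjoint_exprEdges_unfoldCopy hX.symm fun i => ?_
  exact (sat_unfoldCopy_iff.1 (hcopy i)).imp_left (sat_unrename fun _ => rfl)

open Classical in
noncomputable def tagByBlock {ι : Type} (S : ι → Set (Edge N P)) (w : Edge N P → Consumer C P) :
    Edge N P → Consumer (ι × C) P := fun x =>
  if h : ∃ i, x ∈ S i then (w x).rename (Prod.mk h.choose) else .opn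

lemma tagByBlock_of_mem {ι : Type} {S : ι → Set (Edge N P)} {w : Edge N P → Consumer C P}
    (hS : Pairwise (Disjoint on S)) {i : ι} {x : Edge N P} (hx : x ∈ S i) :
    tagByBlock S w x = (w x).rename (Prod.mk i) := by
  have h : ∃ j, x ∈ S j := ⟨i, hx⟩
  rw [tagByBlock, dif_pos h, hS.eq (Set.not_disjoint_iff.2 ⟨x, h.choose_spec, hx⟩)]

theorem sat_unfoldExpr_tagByBlock {w : Edge N P → Consumer C P} {S : Fin hi → Set (Edge N P)}
    (hdisj : Pairwise (Disjoint on S)) (hS : ∀ i, Sat w E (S i) ∨ (lo ≤ i ∧ S i = ∅)) :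
    Sat (tagByBlock S w) (unfoldExpr E lo hi) (⋃ i, S i) := by
  have hblock : ∀ i, exprEdges (tagByBlock S w) (unfoldCopy E lo i) (⋃ j, S j) = S i := by
    intro i
    ext x
    rw [mem_exprEdges_unfoldCopy, Set.mem_iUnion]
    constructor
    · rintro ⟨⟨j, hx⟩, c, -, hc⟩
      rw [tagByBlock_of_mem hdisj hx] at hc
      cases hw : w x <;>
        simp only [Consumer.rename, hw, Consumer.tc.injEq, Prod.mk.injEq, reduceCtorEq] at hc
      exact hc.1 ▸ hx
    · intro hx
      obtain ⟨c, ho, hc⟩ : ∃ c, occursIn c E ∧ w x = .tc c := by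
        rcases hS i with h | ⟨-, h⟩
        · exact h.consumed x hx
        · simp [h] at hx
      exact ⟨⟨i, hx⟩, c, ho, by rw [tagByBlock_of_mem hdisj hx, hc]; rfl⟩
  refine sat_unfoldExpr_iff.2 ⟨by simp only [hblock], fun i => ?_⟩
  rw [hblock, sat_unfoldCopy_iff]
  refine (hS i).imp_left fun h => sat_of_eqOn (fun x hx => (tagByBlock_of_mem hdisj hx).symm) ?_
  exact (sat_rename_iff (Prod.mk_right_injective i)).2 h

theorem exists_sat_unfoldExpr_of_sat_rep {w : Edge N P → Consumer C P} {X : Set (Edge N P)}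
    (h : Sat w (.rep E lo hi) X) :
    ∃ w' : Edge N P → Consumer (Fin hi × C) P, Sat w' (unfoldExpr E lo hi) X := by
  obtain ⟨S, hdisj, rfl, hS⟩ := exists_blocks_of_sat_rep h
  exact ⟨_, sat_unfoldExpr_tagByBlock hdisj hS⟩

end Unfolding

/-- for every set `Neigh` of neighbourhood edges, `Neigh` can
be matched against `E[lo;hi]` (by some witness into the consumers of the
occurrences of `E`) iff it can be matched against the unfolding `U` (by some
witness into the consumers of the occurrences of `U`); moreover, from a witness
`w'` for `U` the witness `π ∘ w'` works for `E[lo;hi]`, where `π` projects the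
copied occurrences back to the original ones. -/
theorem statement_8 {N P C : Type} (E : SExpr C) (lo hi : ℕ) (hle : lo ≤ hi) :
    ∀ Neigh : Set (Edge N P),
      ((∃ w : Edge N P → Consumer C P,
          (∀ e ∈ Neigh, ∃ c, occursIn c E ∧ w e = Consumer.tc c) ∧
          Sat w (SExpr.rep E lo (hi : ℕ∞)) Neigh) ↔
        (∃ w' : Edge N P → Consumer (Fin hi × C) P,
          (∀ e ∈ Neigh, ∃ c', occursIn c' (unfoldExpr E lo hi) ∧ w' e = Consumer.tc c') ∧
          Sat w' (unfoldExpr E lo hi) Neigh)) ∧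
      (∀ w' : Edge N P → Consumer (Fin hi × C) P,
        (∀ e ∈ Neigh, ∃ c', occursIn c' (unfoldExpr E lo hi) ∧ w' e = Consumer.tc c') →
        Sat w' (unfoldExpr E lo hi) Neigh →
        Sat (fun e => Consumer.rename Prod.snd (w' e)) (SExpr.rep E lo (hi : ℕ∞)) Neigh) := by
  intro Neigh
  have project := fun w' (h : Sat w' (unfoldExpr E lo hi) Neigh) => sat_rep_of_sat_unfoldExpr hle h
  refine ⟨⟨fun ⟨_, _, h⟩ => ?_, fun ⟨w', _, h⟩ => ⟨_, (project w' h).consumed, project w' h⟩⟩,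
    fun w' _ => project w'⟩
  obtain ⟨w', h'⟩ := exists_sat_unfoldExpr_of_sat_rep h
  exact ⟨w', h'.consumed, h'⟩
end
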